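/- Let H ∈ ℂ[[z]]^{×n} with o(H) ≥ 2 and define N_{[m]} ∈ ℂ[[z]]^{×n} (m ≥ 1) recursively by N_{[1]} = H and N_{[m]} = (1/(m−1))·Σ_{k+l=m, k,l≥1} JN_{[k]}·N_{[l]} for m ≥ 2. Then o(N_{[m]}) ≥ m + 1 for every m ≥ 1. -/

import Mathlib

/-
Common setup: `ℂ[[z]]` is `MvPowerSeries (Fin n) ℂ`; `ℂ[[z,t]]` is realized as
`MvPowerSeries (Fin n) (PowerSeries ℂ)` (power series in `z` with coefficients in `ℂ[[t]]`),
and `ℂ[t][[z]]` as `MvPowerSeries (Fin n) (Polynomial ℂ)`.  Substitution, partial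
derivatives, Jacobian matrices, order and compositional inverses are defined below.
-/

noncomputable section

/-- Construct a multivariate power series from its coefficient function. -/
def PSmk {n : ℕ} {R : Type*} (f : (Fin n →₀ ℕ) → R) : MvPowerSeries (Fin n) R := f

/-- The formal partial derivative `∂/∂z i` on `R[[z₁,…,zₙ]]`. -/
def pd {n : ℕ} {R : Type*} [CommSemiring R] (i : Fin n) (f : MvPowerSeries (Fin n) R) :
    MvPowerSeries (Fin n) R :=
  PSmk fun d => (d i + 1 : ℕ) • MvPowerSeries.coeff (d + Finsupp.single i 1) f

/-- Substitution of the family `a` (each member of positive order in `z`) into `f`: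
the coefficient of `z^m` in `f(a)` is `∑_d (coeff d f) · (coeff of z^m in ∏ aᵢ^dᵢ)`;
the sum is finite when each `aᵢ` has positive order. -/
def sub {n : ℕ} {R : Type*} [CommRing R] (f : MvPowerSeries (Fin n) R)
    (a : Fin n → MvPowerSeries (Fin n) R) : MvPowerSeries (Fin n) R :=
  PSmk fun m => ∑ᶠ d : Fin n →₀ ℕ,
    (MvPowerSeries.coeff d f) * MvPowerSeries.coeff m (∏ i, a i ^ d i)

/-- `f` has order (in `z`) at least `k`: all coefficients in total degree `< k` vanish. -/
def ordGE {n : ℕ} {R : Type*} [CommSemiring R] (k : ℕ) (f : MvPowerSeries (Fin n) R) : Prop :=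
  ∀ d : Fin n →₀ ℕ, (d.sum fun _ e => e) < k → MvPowerSeries.coeff d f = 0

/-- Each component of the formal map `H` has order (in `z`) at least `k`. -/
def vordGE {n : ℕ} {R : Type*} [CommSemiring R] (k : ℕ)
    (H : Fin n → MvPowerSeries (Fin n) R) : Prop :=
  ∀ i, ordGE k (H i)

/-- The Jacobian matrix `(∂Hᵢ/∂z_j)` (with respect to `z`) of a formal map. -/
def jac {n : ℕ} {R : Type*} [CommSemiring R] (H : Fin n → MvPowerSeries (Fin n) R) :
    Matrix (Fin n) (Fin n) (MvPowerSeries (Fin n) R) :=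
  Matrix.of fun i j => pd j (H i)

/-- `G` is the formal compositional inverse of the formal map `F`. -/
def IsInv {n : ℕ} {R : Type*} [CommRing R] (F G : Fin n → MvPowerSeries (Fin n) R) : Prop :=
  (∀ i, sub (F i) G = MvPowerSeries.X i) ∧ (∀ i, sub (G i) F = MvPowerSeries.X i)

/-- `ℂ[[z,t]]`, realized as power series in `z` with coefficients in `ℂ[[t]]`. -/
abbrev PSZT (n : ℕ) := MvPowerSeries (Fin n) (PowerSeries ℂ)

/-- The element `t` of `ℂ[[z,t]]`. -/
def tT {n : ℕ} : PSZT n := MvPowerSeries.C PowerSeries.X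

/-- The inclusion `ℂ[[z]] → ℂ[[z,t]]`. -/
def inclZ {n : ℕ} : MvPowerSeries (Fin n) ℂ →+* PSZT n :=
  MvPowerSeries.map (PowerSeries.C (R := ℂ))

/-- Setting `t = 0`, as a ring homomorphism `ℂ[[z,t]] → ℂ[[z]]`. -/
def evalT0 {n : ℕ} : PSZT n →+* MvPowerSeries (Fin n) ℂ :=
  MvPowerSeries.map (PowerSeries.constantCoeff (R := ℂ))

/-- The formal partial derivative `∂/∂t` on `ℂ[[z,t]]`. -/
def dt {n : ℕ} (f : PSZT n) : PSZT n :=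
  PSmk fun d => PowerSeries.mk fun k =>
    ((k + 1 : ℕ) : ℂ) * PowerSeries.coeff (k + 1) (MvPowerSeries.coeff d f)

/-- `ℂ[t][[z]]`: power series in `z` whose coefficients are polynomials in `t`. -/
abbrev PSZP (n : ℕ) := MvPowerSeries (Fin n) (Polynomial ℂ)

/-- The element `t` of `ℂ[t][[z]]`. -/
def tP {n : ℕ} : PSZP n := MvPowerSeries.C Polynomial.X

/-- The inclusion `ℂ[[z]] → ℂ[t][[z]]`. -/
def inclZP {n : ℕ} : MvPowerSeries (Fin n) ℂ →+* PSZP n :=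
  MvPowerSeries.map Polynomial.C

/-- The inclusion `ℂ[t][[z]] → ℂ[[z,t]]`. -/
def polyToSer {n : ℕ} : PSZP n →+* PSZT n :=
  MvPowerSeries.map Polynomial.coeToPowerSeries.ringHom

/-- The substitution `t ↦ t + s` on `ℂ[t][[z]]`, for `s ∈ ℂ`. -/
def tshift {n : ℕ} (s : ℂ) : PSZP n →+* PSZP n :=
  MvPowerSeries.map
    ((Polynomial.aeval (R := ℂ) (Polynomial.X + Polynomial.C s)).toRingHom)

lemma deg_add {n : ℕ} (a b : Fin n →₀ ℕ) :
    ((a + b).sum fun _ e => e) = (a.sum fun _ e => e) + (b.sum fun _ e => e) :=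
  Finsupp.sum_add_index' (fun _ => rfl) (fun _ _ _ => rfl)

lemma ordGE_smul {n : ℕ} {k : ℕ} {c : ℂ} {f : MvPowerSeries (Fin n) ℂ}
    (hf : ordGE k f) : ordGE k (c • f) := by
  intro d hd
  rw [map_smul, hf d hd, smul_zero]

lemma ordGE_sum {n : ℕ} {k : ℕ} {ι : Type*} {s : Finset ι}
    {f : ι → MvPowerSeries (Fin n) ℂ} (hf : ∀ x ∈ s, ordGE k (f x)) :
    ordGE k (∑ x ∈ s, f x) := by
  intro d hd
  rw [map_sum]
  exact Finset.sum_eq_zero fun x hx => hf x hx d hd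

lemma ordGE_mul {n : ℕ} {a b : ℕ} {f g : MvPowerSeries (Fin n) ℂ}
    (hf : ordGE a f) (hg : ordGE b g) : ordGE (a + b) (f * g) := by
  intro d hd
  rw [MvPowerSeries.coeff_mul]
  apply Finset.sum_eq_zero
  intro p hp
  have hsum := Finset.HasAntidiagonal.mem_antidiagonal.mp hp
  by_cases h1 : (p.1.sum fun _ e => e) < a
  · rw [hf p.1 h1, zero_mul]
  · have : (p.2.sum fun _ e => e) < b := by
      have := deg_add p.1 p.2
      rw [hsum] at this
      omega
    rw [hg p.2 this, mul_zero]

lemma ordGE_pd {n : ℕ} {k : ℕ} {i : Fin n} {f : MvPowerSeries (Fin n) ℂ}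
    (hf : ordGE (k + 1) f) : ordGE k (pd i f) := by
  intro d hd
  show (d i + 1 : ℕ) • MvPowerSeries.coeff (d + Finsupp.single i 1) f = 0
  rw [hf, smul_zero]
  rw [deg_add, Finsupp.sum_single_index rfl]
  omega

/-- if `N_{[1]} = H` with `o(H) ≥ 2` and, for `m ≥ 2`,
`N_{[m]} = (1/(m-1)) ∑_{k+l=m, k,l≥1} JN_{[k]}·N_{[l]}`, then `o(N_{[m]}) ≥ m + 1`
for every `m ≥ 1`. -/
theorem stmt6 {n : ℕ} (H : Fin n → MvPowerSeries (Fin n) ℂ) (hH : vordGE 2 H)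
    (Nseq : ℕ → Fin n → MvPowerSeries (Fin n) ℂ)
    (h1 : Nseq 1 = H)
    (hrec : ∀ m : ℕ, 2 ≤ m →
      Nseq m = ((m : ℂ) - 1)⁻¹ •
        ∑ k ∈ Finset.Ico 1 m, (jac (Nseq k)).mulVec (Nseq (m - k))) :
    ∀ m : ℕ, 1 ≤ m → vordGE (m + 1) (Nseq m) := by
  intro m
  induction m using Nat.strong_induction_on with
  | _ m IH =>
    intro hm i
    rcases eq_or_lt_of_le hm with h | h
    · rw [← h, h1]; exact hH i
    · have hm2 : 2 ≤ m := h
      rw [hrec m hm2]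
      have : (((m : ℂ) - 1)⁻¹ •
          ∑ k ∈ Finset.Ico 1 m, (jac (Nseq k)).mulVec (Nseq (m - k))) i
          = ((m : ℂ) - 1)⁻¹ •
          ∑ k ∈ Finset.Ico 1 m, ((jac (Nseq k)).mulVec (Nseq (m - k)) i) := by
        simp [Finset.sum_apply]
      rw [this]
      apply ordGE_smul
      apply ordGE_sum
      intro k hk
      obtain ⟨hk1, hkm⟩ := Finset.mem_Ico.mp hk
      have IHk : vordGE (k + 1) (Nseq k) := IH k hkm hk1
      have IHl : vordGE (m - k + 1) (Nseq (m - k)) :=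
        IH (m - k) (by omega) (by omega)
      show ordGE (m + 1) (∑ j, pd j (Nseq k i) * Nseq (m - k) j)
      apply ordGE_sum
      intro j _
      have hmul := ordGE_mul (ordGE_pd (i := j) (IHk i)) (IHl j)
      have heq : k + (m - k + 1) = m + 1 := by omega
      rwa [heq] at hmul
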